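/- Let G be a (d,r)-biregular bipartite graph on [n] ∪ [m] that is an (ℓ, d−Δ)-unique-neighbor expander, and let v₁, ..., v_s: {0,...,r} → ℝ each be nondecreasing with Σ_{j=1}^s (v_j(g+i) − v_j(g)) ≤ iδ for all g, i (and in particular each v_j(g+i) − v_j(g) ≥ 0). For L ⊆ [n] of size ℓ define TV_j(L) = Σ_{u∈[m]} v_j(r − |Γ(u) ∩ L|). Then for any two subsets L, L' of size ℓ, Σ_{j=1}^s |TV_j(L') − TV_j(L)| ≤ 3Δℓδ. -/

import Mathlib

/-!
Write `deg u = |Γ(u) ∩ L|` and `c_j = v_j(r) - v_j(r-1)`, so that `TV_j(L) = m v_j(r) - loss_j(L)`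
with `loss_j(L) = Σ_u (v_j(r) - v_j(r - deg u))`. Every one of the at least `(d-Δ)ℓ` unique
neighbours of `L` loses exactly `c_j`, so `loss_j(L) ≥ (d-Δ)ℓ c_j`. Conversely a pool of degree
`k` loses at most `kδ` in total over `j`, and a unique neighbour loses only `Σ_j c_j ≤ δ`; since
the degrees add up to `dℓ`, the excesses `loss_j(L) - (d-Δ)ℓ c_j ≥ 0` add up to at most `Δℓδ`.
The same holds for `L'`, and `|x - y| ≤ x + y` for nonnegative excesses gives `2Δℓδ`.
-/

open Finset

section Bipartite

variable {n m d r : ℕ} (E : Fin n → Finset (Fin m))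

lemma card_filter_mem_le (hright : ∀ v : Fin m, #{u | v ∈ E u} = r) (L : Finset (Fin n))
    (u : Fin m) : #{w ∈ L | u ∈ E w} ≤ r :=
  hright u ▸ card_le_card (filter_subset_filter _ (subset_univ L))

lemma sum_card_filter_mem (hleft : ∀ u, #(E u) = d) (L : Finset (Fin n)) :
    ∑ u : Fin m, #{w ∈ L | u ∈ E w} = d * #L := by
  have := sum_card_bipartiteAbove_eq_sum_card_bipartiteBelow (s := univ) (t := L)
    (r := fun (u : Fin m) w => u ∈ E w)
  simp only [bipartiteAbove, bipartiteBelow, filter_univ_mem, hleft] at this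
  rw [this, sum_const, smul_eq_mul, mul_comm]

end Bipartite

section ValueLoss

variable {ι J : Type*} [Fintype ι] [Fintype J]

def valueLoss (f : ℕ → ℝ) (r : ℕ) (deg : ι → ℕ) : ℝ :=
  ∑ u, (f r - f (r - deg u))

lemma sum_sub_sum_eq_valueLoss_sub (f : ℕ → ℝ) (r : ℕ) (deg deg' : ι → ℕ) :
    ∑ u, f (r - deg' u) - ∑ u, f (r - deg u) = valueLoss f r deg - valueLoss f r deg' := by
  simp only [valueLoss, sum_sub_distrib]
  ring

lemma mul_sub_pred_le_valueLoss {f : ℕ → ℝ} {r : ℕ} (hf : MonotoneOn f (Set.Iic r))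
    {deg : ι → ℕ} {K : ℝ} (hK : K ≤ #{u | deg u = 1}) :
    K * (f r - f (r - 1)) ≤ valueLoss f r deg := by
  have hdrop : ∀ k, 0 ≤ f r - f (r - k) := fun k =>
    sub_nonneg.2 (hf (Set.mem_Iic.2 (Nat.sub_le _ _)) Set.self_mem_Iic (Nat.sub_le _ _))
  calc K * (f r - f (r - 1)) ≤ #{u | deg u = 1} * (f r - f (r - 1)) :=
        mul_le_mul_of_nonneg_right hK (hdrop 1)
    _ = ∑ u with deg u = 1, (f r - f (r - deg u)) := by
        rw [sum_congr rfl fun u hu => by rw [(mem_filter.1 hu).2], sum_const, nsmul_eq_mul]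
    _ ≤ valueLoss f r deg :=
        sum_le_sum_of_subset_of_nonneg (filter_subset _ _) fun u _ _ => hdrop (deg u)

variable {v : J → ℕ → ℝ} {r : ℕ} {δ : ℝ}
  (hlip : ∀ g i, g + i ≤ r → ∑ j, (v j (g + i) - v j g) ≤ i * δ)
include hlip

lemma sum_sub_le_of_le {k : ℕ} (hk : k ≤ r) : ∑ j, (v j r - v j (r - k)) ≤ k * δ := by
  have := hlip (r - k) k (by omega)
  rwa [Nat.sub_add_cancel hk] at this

lemma sum_sub_pred_le (hδ : 0 ≤ δ) : ∑ j, (v j r - v j (r - 1)) ≤ δ := by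
  rcases Nat.eq_zero_or_pos r with rfl | hr
  · simpa using hδ
  · simpa using sum_sub_le_of_le hlip hr

lemma sum_valueLoss_le {deg : ι → ℕ} (hdeg : ∀ u, deg u ≤ r) :
    ∑ j, valueLoss (v j) r deg ≤
      (∑ u, deg u : ℕ) * δ - #{u | deg u = 1} * (δ - ∑ j, (v j r - v j (r - 1))) := by
  set c := ∑ j, (v j r - v j (r - 1))
  have hpool : ∀ u, ∑ j, (v j r - v j (r - deg u)) ≤
      deg u * δ - if deg u = 1 then δ - c else 0 := by
    intro u
    split_ifs with h
    · simp [h, c]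
    · simpa using sum_sub_le_of_le hlip (hdeg u)
  calc ∑ j, valueLoss (v j) r deg = ∑ u, ∑ j, (v j r - v j (r - deg u)) := sum_comm
    _ ≤ ∑ u, (deg u * δ - if deg u = 1 then δ - c else 0) := sum_le_sum fun u _ => hpool u
    _ = _ := by
        rw [sum_sub_distrib, ← sum_mul, sum_ite, sum_const_zero, add_zero, sum_const,
          nsmul_eq_mul]
        push_cast
        ring

lemma sum_valueLoss_sub_mul_le (hδ : 0 ≤ δ) {deg : ι → ℕ} (hdeg : ∀ u, deg u ≤ r) {K : ℝ}
    (hK : K ≤ #{u | deg u = 1}) :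
    ∑ j, (valueLoss (v j) r deg - K * (v j r - v j (r - 1))) ≤ ((∑ u, deg u : ℕ) - K) * δ := by
  have hsaving := mul_le_mul_of_nonneg_right hK (sub_nonneg.2 (sum_sub_pred_le hlip hδ))
  rw [sum_sub_distrib, ← mul_sum]
  linarith [sum_valueLoss_le hlip hdeg]

end ValueLoss

lemma sum_abs_sub_le_of_sum_sub_le {J : Type*} [Fintype J] {a b lo : J → ℝ} {ε : ℝ}
    (ha : ∀ j, lo j ≤ a j) (hb : ∀ j, lo j ≤ b j)
    (hsa : ∑ j, (a j - lo j) ≤ ε) (hsb : ∑ j, (b j - lo j) ≤ ε) :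
    ∑ j, |a j - b j| ≤ 2 * ε :=
  calc ∑ j, |a j - b j| ≤ ∑ j, ((a j - lo j) + (b j - lo j)) := sum_le_sum fun j _ => by
        rw [abs_le]; constructor <;> linarith [ha j, hb j]
    _ ≤ 2 * ε := by rw [sum_add_distrib]; linarith

theorem stmt12_general (n m d r Δ ℓ s : ℕ) (δ : ℝ) (hδ : 0 ≤ δ)
    (E : Fin n → Finset (Fin m))
    (hleft : ∀ u, (E u).card = d)
    (hright : ∀ v : Fin m, (Finset.univ.filter (fun u => v ∈ E u)).card = r)
    (hexp : ∀ S : Finset (Fin n), S.card ≤ ℓ →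
      ((d : ℝ) - Δ) * S.card ≤
        ((Finset.univ.filter
          (fun v : Fin m => (S.filter (fun u => v ∈ E u)).card = 1)).card : ℝ))
    (v : Fin s → ℕ → ℝ)
    (hmono : ∀ j, ∀ i i', i ≤ i' → i' ≤ r → v j i ≤ v j i')
    (hlip : ∀ g i, g + i ≤ r → ∑ j : Fin s, (v j (g + i) - v j g) ≤ i * δ)
    (L L' : Finset (Fin n)) (hL : L.card = ℓ) (hL' : L'.card = ℓ) :
    ∑ j : Fin s,
      |(∑ u : Fin m, v j (r - (L'.filter (fun w => u ∈ E w)).card)) -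
        (∑ u : Fin m, v j (r - (L.filter (fun w => u ∈ E w)).card))| ≤ 3 * Δ * ℓ * δ := by
  have hmonoOn : ∀ j, MonotoneOn (v j) (Set.Iic r) :=
    fun j i _ i' hi' hii' => hmono j i i' hii' hi'
  have hK (S : Finset (Fin n)) (hS : #S = ℓ) :
      ((d : ℝ) - Δ) * ℓ ≤ #{u | #{w ∈ S | u ∈ E w} = 1} := by
    simpa [hS] using hexp S hS.le
  have hex := sum_valueLoss_sub_mul_le hlip hδ (card_filter_mem_le E hright L) (hK L hL)
  have hex' := sum_valueLoss_sub_mul_le hlip hδ (card_filter_mem_le E hright L') (hK L' hL')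
  have hΔ : ((d * ℓ : ℕ) : ℝ) - (d - Δ) * ℓ = Δ * ℓ := by push_cast; ring
  rw [sum_card_filter_mem E hleft, hL, hΔ] at hex
  rw [sum_card_filter_mem E hleft, hL', hΔ] at hex'
  simp only [sum_sub_sum_eq_valueLoss_sub]
  calc _ ≤ 2 * (Δ * ℓ * δ) :=
        sum_abs_sub_le_of_sum_sub_le (fun j => mul_sub_pred_le_valueLoss (hmonoOn j) (hK L hL))
          (fun j => mul_sub_pred_le_valueLoss (hmonoOn j) (hK L' hL')) hex hex'
    _ ≤ 3 * Δ * ℓ * δ := by linarith [show (0 : ℝ) ≤ Δ * ℓ * δ by positivity]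

/-- Abstract form of Theorem `unique-cdo` for the entire CDO: with tranche-value
functions `v₁,...,v_s`, each nondecreasing and with total increments
`Σ_j (v_j(g+i) − v_j(g)) ≤ iδ`, the L1-norm of the change of the vector of total
tranche values under any relocation of the `ℓ` lemons is at most `3Δℓδ`. -/
theorem stmt12 (n m d r Δ ℓ s : ℕ) (δ : ℝ) (hδ : 0 ≤ δ)
    (hbal : n * d = m * r)
    (E : Fin n → Finset (Fin m))
    (hleft : ∀ u, (E u).card = d)
    (hright : ∀ v : Fin m, (Finset.univ.filter (fun u => v ∈ E u)).card = r)
    (hexp : ∀ S : Finset (Fin n), S.card ≤ ℓ →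
      ((d : ℝ) - Δ) * S.card ≤
        ((Finset.univ.filter
          (fun v : Fin m => (S.filter (fun u => v ∈ E u)).card = 1)).card : ℝ))
    (v : Fin s → ℕ → ℝ)
    (hmono : ∀ j, ∀ i i', i ≤ i' → i' ≤ r → v j i ≤ v j i')
    (hlip : ∀ g i, g + i ≤ r → ∑ j : Fin s, (v j (g + i) - v j g) ≤ i * δ)
    (L L' : Finset (Fin n)) (hL : L.card = ℓ) (hL' : L'.card = ℓ) :
    ∑ j : Fin s,
      |(∑ u : Fin m, v j (r - (L'.filter (fun w => u ∈ E w)).card)) -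
        (∑ u : Fin m, v j (r - (L.filter (fun w => u ∈ E w)).card))| ≤ 3 * Δ * ℓ * δ :=
  stmt12_general n m d r Δ ℓ s δ hδ E hleft hright hexp v hmono hlip L L' hL hL'
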